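/- For all h, s ∈ (0,1): −(4/(h²(1−h)²))·(s−h)² ≤ q(s) − q(h) − q'(h)(s−h) ≤ −(s−h)², where q(s) = (2π)^{-1/2} e^{-Ψ(s)²/2} and q'(h) = −Ψ(h). -/

import Mathlib

open MeasureTheory ProbabilityTheory Real Set Filter

noncomputable def gamma1 : Measure ℝ := gaussianReal 0 1

noncomputable def Phi (t : ℝ) : ℝ :=
  ∫ s in Set.Iic t, (Real.sqrt (2 * Real.pi))⁻¹ * Real.exp (-s ^ 2 / 2)

noncomputable def Psi : ℝ → ℝ := Function.invFun Phi
noncomputable def q2 (s : ℝ) : ℝ := (Real.sqrt (2 * Real.pi))⁻¹ * Real.exp (-(Psi s) ^ 2 / 2)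
open Topology

/-!
Write `q2 = φ ∘ Psi` with `φ` the standard Gaussian density. Then `q2' = -Psi` and
`q2'' = -1 / q2`, and `q2 ≤ 1 / √(2π) < 1 / 2` gives `q2'' ≤ -2`: this is the upper bound.
Letting `s` tend to `0` and to `1` in the upper bound, where `q2 s → 0`, yields
`t (1 - t) ≤ q2 t` and `|Psi t| ≤ 1 / (2 t (1 - t))`. For the lower bound put `a = h (1 - h)`.
If `|s - h| ≤ a / 2`, then `q2 ≥ a / 4` between `h` and `s`, so `q2'' ≥ -4 / a` there;
otherwise the crude bounds `0 < q2 < 1 / 2` and the bound on `|Psi h|` suffice.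
-/

lemma ConvexOn.add_mul_sub_le_of_hasDerivAt {S : Set ℝ} {f : ℝ → ℝ} {f' x y : ℝ}
    (hf : ConvexOn ℝ S f) (hx : x ∈ S) (hy : y ∈ S) (hfx : HasDerivAt f f' x) :
    f x + f' * (y - x) ≤ f y := by
  rcases lt_trichotomy x y with hxy | rfl | hyx
  · have := hf.le_slope_of_hasDerivAt hx hy hxy hfx
    rw [slope_def_field, le_div_iff₀ (sub_pos.2 hxy)] at this
    linarith
  · simp
  · have := hf.slope_le_of_hasDerivAt hy hx hyx hfx
    rw [slope_def_field, div_le_iff₀ (sub_pos.2 hyx)] at this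
    linarith

section TaylorBounds

variable {D : Set ℝ} {f f' f'' : ℝ → ℝ} {c x y : ℝ}

lemma mul_sq_le_sub_sub_of_le_deriv2 (hD : Convex ℝ D)
    (hf : ∀ t ∈ D, HasDerivAt f (f' t) t) (hf' : ∀ t ∈ D, HasDerivAt f' (f'' t) t)
    (hc : ∀ t ∈ D, c ≤ f'' t) (hx : x ∈ D) (hy : y ∈ D) :
    c / 2 * (y - x) ^ 2 ≤ f y - f x - f' x * (y - x) := by
  let g t := f t - c / 2 * (t - x) ^ 2
  have hg : ∀ t ∈ D, HasDerivAt g (f' t - c * (t - x)) t := fun t ht ↦ by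
    have hsq : HasDerivAt (fun t ↦ (t - x) ^ 2) (2 * (t - x)) t := by
      simpa using ((hasDerivAt_id' t).sub_const x).fun_pow 2
    exact ((hf t ht).fun_sub (hsq.const_mul (c / 2))).congr_deriv (by ring)
  have hg' : ∀ t ∈ D, HasDerivAt (fun t ↦ f' t - c * (t - x)) (f'' t - c) t := fun t ht ↦ by
    simpa using (hf' t ht).fun_sub (((hasDerivAt_id t).sub_const x).const_mul c)
  have hconvex : ConvexOn ℝ D g :=
    convexOn_of_hasDerivWithinAt2_nonneg hD
      (fun t ht ↦ (hg t ht).continuousAt.continuousWithinAt)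
      (fun t ht ↦ (hg t (interior_subset ht)).hasDerivWithinAt)
      (fun t ht ↦ (hg' t (interior_subset ht)).hasDerivWithinAt)
      (fun t ht ↦ sub_nonneg.2 (hc t (interior_subset ht)))
  have := hconvex.add_mul_sub_le_of_hasDerivAt hx hy (hg x hx)
  simp only [g, sub_self] at this
  linarith

lemma sub_sub_le_mul_sq_of_deriv2_le (hD : Convex ℝ D)
    (hf : ∀ t ∈ D, HasDerivAt f (f' t) t) (hf' : ∀ t ∈ D, HasDerivAt f' (f'' t) t)
    (hc : ∀ t ∈ D, f'' t ≤ c) (hx : x ∈ D) (hy : y ∈ D) :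
    f y - f x - f' x * (y - x) ≤ c / 2 * (y - x) ^ 2 := by
  have := mul_sq_le_sub_sub_of_le_deriv2 (f := -f) (f' := -f') (c := -c) hD
    (fun t ht ↦ (hf t ht).neg) (fun t ht ↦ (hf' t ht).neg) (fun t ht ↦ neg_le_neg (hc t ht))
    hx hy
  simp only [Pi.neg_apply] at this
  linarith

end TaylorBounds

lemma gaussianPDFReal_zero_one (x : ℝ) :
    gaussianPDFReal 0 1 x = (√(2 * π))⁻¹ * exp (-x ^ 2 / 2) := by
  simp [gaussianPDFReal]

lemma continuous_gaussianPDFReal_zero_one : Continuous (gaussianPDFReal 0 1) := by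
  rw [gaussianPDFReal_def]
  fun_prop

lemma hasDerivAt_gaussianPDFReal_zero_one (x : ℝ) :
    HasDerivAt (gaussianPDFReal 0 1) (-x * gaussianPDFReal 0 1 x) x := by
  have hexponent : HasDerivAt (fun y : ℝ ↦ -y ^ 2 / 2) (-x) x :=
    ((hasDerivAt_pow 2 x).fun_neg.div_const 2).congr_deriv (by ring)
  rw [show gaussianPDFReal 0 1 = fun y ↦ (√(2 * π))⁻¹ * exp (-y ^ 2 / 2) from
    funext gaussianPDFReal_zero_one]
  exact (hexponent.exp.const_mul _).congr_deriv (by beta_reduce; ring)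

lemma tendsto_gaussianPDFReal_zero_one_cocompact :
    Tendsto (gaussianPDFReal 0 1) (cocompact ℝ) (𝓝 0) := by
  have := (tendsto_rpow_abs_mul_exp_neg_mul_sq_cocompact one_half_pos 0).const_mul
    (√(2 * π))⁻¹
  rw [mul_zero] at this
  refine this.congr fun x ↦ ?_
  rw [gaussianPDFReal_zero_one, rpow_zero, one_mul]
  ring_nf

lemma Phi_eq_setIntegral (t : ℝ) : Phi t = ∫ x in Iic t, gaussianPDFReal 0 1 x := by
  simp only [Phi, gaussianPDFReal_zero_one]

lemma Phi_eq_cdf : Phi = cdf gamma1 := by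
  ext t
  rw [gamma1, cdf_eq_real, measureReal_def, gaussianReal_apply_eq_integral _ one_ne_zero,
    ENNReal.toReal_ofReal (setIntegral_nonneg measurableSet_Iic fun x _ ↦
      gaussianPDFReal_nonneg _ _ _), Phi_eq_setIntegral]

lemma tendsto_Phi_atBot : Tendsto Phi atBot (𝓝 0) := Phi_eq_cdf ▸ tendsto_cdf_atBot _

lemma tendsto_Phi_atTop : Tendsto Phi atTop (𝓝 1) := Phi_eq_cdf ▸ tendsto_cdf_atTop _

lemma hasDerivAt_Phi (x : ℝ) : HasDerivAt Phi (gaussianPDFReal 0 1 x) x := by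
  have hint := integrable_gaussianPDFReal 0 1
  have hFTC := intervalIntegral.integral_hasDerivAt_right hint.intervalIntegrable
    (continuous_gaussianPDFReal_zero_one.stronglyMeasurableAtFilter _ _)
    continuous_gaussianPDFReal_zero_one.continuousAt (a := 0) (b := x)
  refine (hFTC.const_add (Phi 0)).congr_of_eventuallyEq (Eventually.of_forall fun u ↦ ?_)
  dsimp only
  rw [Phi_eq_setIntegral, Phi_eq_setIntegral,
    ← intervalIntegral.integral_Iic_sub_Iic hint.integrableOn hint.integrableOn]
  ring

lemma strictMono_Phi : StrictMono Phi :=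
  strictMono_of_hasDerivAt_pos hasDerivAt_Phi fun x ↦ gaussianPDFReal_pos 0 1 x one_ne_zero

lemma Phi_mem_Ioo (x : ℝ) : Phi x ∈ Ioo 0 1 :=
  ⟨(strictMono_Phi.monotone.le_of_tendsto tendsto_Phi_atBot (x - 1)).trans_lt
      (strictMono_Phi (sub_one_lt x)),
    (strictMono_Phi (lt_add_one x)).trans_le
      (strictMono_Phi.monotone.ge_of_tendsto tendsto_Phi_atTop (x + 1))⟩

lemma Phi_Psi {s : ℝ} (hs : s ∈ Ioo 0 1) : Phi (Psi s) = s :=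
  Function.invFun_eq <| mem_range_of_exists_le_of_exists_ge
    (continuous_iff_continuousAt.2 (hasDerivAt_Phi · |>.continuousAt))
    ((tendsto_Phi_atBot.eventually (gt_mem_nhds hs.1)).exists.imp fun _ ↦ le_of_lt)
    ((tendsto_Phi_atTop.eventually (lt_mem_nhds hs.2)).exists.imp fun _ ↦ le_of_lt)

lemma Psi_Phi (x : ℝ) : Psi (Phi x) = x :=
  Function.leftInverse_invFun strictMono_Phi.injective x

lemma continuousAt_Psi {s : ℝ} (hs : s ∈ Ioo 0 1) : ContinuousAt Psi s := by
  have hmono : MonotoneOn Psi (Ioo 0 1) := fun a ha b hb hab ↦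
    strictMono_Phi.le_iff_le.1 (by rwa [Phi_Psi ha, Phi_Psi hb])
  have himage : Psi '' Ioo 0 1 = univ :=
    eq_univ_of_forall fun x ↦ ⟨Phi x, Phi_mem_Ioo x, Psi_Phi x⟩
  exact continuousAt_of_monotoneOn_of_image_mem_nhds hmono (Ioo_mem_nhds hs.1 hs.2)
    (himage ▸ univ_mem)

lemma q2_eq_gaussianPDFReal (s : ℝ) : q2 s = gaussianPDFReal 0 1 (Psi s) := by
  rw [q2, gaussianPDFReal_zero_one]

lemma q2_pos (s : ℝ) : 0 < q2 s :=
  q2_eq_gaussianPDFReal s ▸ gaussianPDFReal_pos 0 1 _ one_ne_zero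

lemma q2_lt_half (s : ℝ) : q2 s < 1 / 2 := by
  have hsqrt : 2 < √(2 * π) := (lt_sqrt zero_le_two).2 (by linarith [pi_gt_three])
  have hexp : exp (-Psi s ^ 2 / 2) ≤ 1 := exp_le_one_iff.2 (by nlinarith)
  calc q2 s ≤ (√(2 * π))⁻¹ * 1 := by rw [q2]; gcongr
    _ < 1 / 2 := by rw [mul_one, one_div]; gcongr

lemma hasDerivAt_Psi {s : ℝ} (hs : s ∈ Ioo 0 1) : HasDerivAt Psi (q2 s)⁻¹ s := by
  rw [q2_eq_gaussianPDFReal]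
  exact (hasDerivAt_Phi (Psi s)).of_local_left_inverse (continuousAt_Psi hs)
    (gaussianPDFReal_pos 0 1 _ one_ne_zero).ne'
    (eventually_of_mem (Ioo_mem_nhds hs.1 hs.2) fun _ ↦ Phi_Psi)

lemma hasDerivAt_q2 {s : ℝ} (hs : s ∈ Ioo 0 1) : HasDerivAt q2 (-Psi s) s := by
  rw [show q2 = gaussianPDFReal 0 1 ∘ Psi from funext q2_eq_gaussianPDFReal]
  refine ((hasDerivAt_gaussianPDFReal_zero_one (Psi s)).comp s (hasDerivAt_Psi hs)).congr_deriv ?_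
  rw [← q2_eq_gaussianPDFReal]
  field_simp [(q2_pos s).ne']

lemma q2_sub_sub_le {h s : ℝ} (hh : h ∈ Ioo 0 1) (hs : s ∈ Ioo 0 1) :
    q2 s - q2 h - (-Psi h) * (s - h) ≤ -(s - h) ^ 2 := by
  have hbound : ∀ t ∈ Ioo (0 : ℝ) 1, -(q2 t)⁻¹ ≤ -2 := fun t _ ↦ by
    have := (lt_inv_comm₀ two_pos (q2_pos t)).2 (by linarith [q2_lt_half t])
    linarith
  have := sub_sub_le_mul_sq_of_deriv2_le (f' := fun t ↦ -Psi t) (convex_Ioo 0 1)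
    (fun t ↦ hasDerivAt_q2) (fun t ht ↦ (hasDerivAt_Psi ht).neg) hbound hh hs
  linarith

/-- The upper bound at `s = Phi y`, in the limit along `l`, where `Phi y → e` and
`q2 (Phi y) = φ y → 0`; `e` is `0` or `1` in practice. -/
lemma mul_sub_add_sq_le_q2 {l : Filter ℝ} [l.NeBot] {e t : ℝ} (hl : l ≤ cocompact ℝ)
    (he : Tendsto Phi l (𝓝 e)) (ht : t ∈ Ioo 0 1) :
    Psi t * (e - t) + (e - t) ^ 2 ≤ q2 t := by
  have hq : Tendsto (fun y ↦ q2 (Phi y)) l (𝓝 0) := by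
    simp only [q2_eq_gaussianPDFReal, Psi_Phi]
    exact tendsto_gaussianPDFReal_zero_one_cocompact.mono_left hl
  have hlim := ((hq.sub_const (q2 t)).sub ((he.sub_const t).const_mul (-Psi t))).add
    ((he.sub_const t).pow 2)
  have := le_of_tendsto' hlim (b := 0) fun y ↦ by linarith [q2_sub_sub_le ht (Phi_mem_Ioo y)]
  linarith

lemma mul_one_sub_le_q2 {t : ℝ} (ht : t ∈ Ioo 0 1) : t * (1 - t) ≤ q2 t := by
  have h0 := mul_sub_add_sq_le_q2 atBot_le_cocompact tendsto_Phi_atBot ht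
  have h1 := mul_sub_add_sq_le_q2 atTop_le_cocompact tendsto_Phi_atTop ht
  nlinarith [mul_le_mul_of_nonneg_left h0 (sub_nonneg.2 ht.2.le),
    mul_le_mul_of_nonneg_left h1 ht.1.le]

lemma abs_Psi_le {t : ℝ} (ht : t ∈ Ioo 0 1) : |Psi t| ≤ 1 / (2 * (t * (1 - t))) := by
  have h0 := mul_sub_add_sq_le_q2 atBot_le_cocompact tendsto_Phi_atBot ht
  have h1 := mul_sub_add_sq_le_q2 atTop_le_cocompact tendsto_Phi_atTop ht
  have hq := q2_lt_half t
  have ht0 := ht.1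
  have ht1 := sub_pos.2 ht.2
  rw [le_div_iff₀ (by positivity)]
  rcases abs_cases (Psi t) with ⟨habs, _⟩ | ⟨habs, _⟩ <;> rw [habs] <;> nlinarith

lemma le_q2_sub_sub_of_abs_le {h s : ℝ} (hh : h ∈ Ioo 0 1)
    (hnear : |s - h| ≤ h * (1 - h) / 2) :
    -(2 / (h * (1 - h))) * (s - h) ^ 2 ≤ q2 s - q2 h - (-Psi h) * (s - h) := by
  set a := h * (1 - h)
  have ha : 0 < a := mul_pos hh.1 (sub_pos.2 hh.2)
  have ha_le : a ≤ h := mul_le_of_le_one_right hh.1.le (by linarith [hh.1])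
  have ha_le' : a ≤ 1 - h := mul_le_of_le_one_left (by linarith [hh.2]) hh.2.le
  set W := Icc (h - a / 2) (h + a / 2)
  have hW : W ⊆ Ioo 0 1 := fun t ht ↦ ⟨by linarith [ht.1], by linarith [ht.2]⟩
  have hq : ∀ t ∈ W, a / 4 ≤ q2 t := fun t ht ↦ by
    have : h / 2 * ((1 - h) / 2) ≤ t * (1 - t) :=
      mul_le_mul (by linarith [ht.1]) (by linarith [ht.2]) (by linarith) (by linarith [hW ht |>.1])
    linarith [mul_one_sub_le_q2 (hW ht)]
  have hbound : ∀ t ∈ W, -(4 / a) ≤ -(q2 t)⁻¹ := fun t ht ↦ by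
    have := inv_anti₀ (by positivity) (hq t ht)
    rw [inv_div] at this
    linarith
  have hsW : s ∈ W := by
    obtain ⟨h₁, h₂⟩ := abs_sub_le_iff.1 hnear
    constructor <;> linarith
  have := mul_sq_le_sub_sub_of_le_deriv2 (f' := fun t ↦ -Psi t) (convex_Icc _ _)
    (fun t ht ↦ hasDerivAt_q2 (hW ht)) (fun t ht ↦ (hasDerivAt_Psi (hW ht)).neg) hbound
    (⟨by linarith, by linarith⟩ : h ∈ W) hsW
  convert this using 2
  ring

lemma le_q2_sub_sub_of_lt_abs {h s : ℝ} (hh : h ∈ Ioo 0 1) (hfar : h * (1 - h) / 2 < |s - h|) :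
    -(4 / (h ^ 2 * (1 - h) ^ 2)) * (s - h) ^ 2 ≤ q2 s - q2 h - (-Psi h) * (s - h) := by
  set a := h * (1 - h)
  have ha : 0 < a := mul_pos hh.1 (sub_pos.2 hh.2)
  set d := |s - h|
  have hu : 1 / 2 < d / a := by rw [lt_div_iff₀ ha]; linarith
  have hPsi : -(d / a / 2) ≤ Psi h * (s - h) := by
    have := mul_le_mul_of_nonneg_right (abs_Psi_le hh) (abs_nonneg (s - h))
    rw [← abs_mul, show 1 / (2 * a) * d = d / a / 2 by field_simp] at this
    linarith [neg_abs_le (Psi h * (s - h))]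
  have hsq : 4 / (h ^ 2 * (1 - h) ^ 2) * (s - h) ^ 2 = 4 * (d / a) ^ 2 := by
    have : h ≠ 0 := hh.1.ne'
    have : 1 - h ≠ 0 := (sub_pos.2 hh.2).ne'
    simp only [a, d, div_pow, mul_pow, sq_abs]
    field_simp
  nlinarith [q2_pos s, q2_lt_half h]

lemma le_q2_sub_sub {h s : ℝ} (hh : h ∈ Ioo 0 1) :
    -(4 / (h ^ 2 * (1 - h) ^ 2)) * (s - h) ^ 2 ≤ q2 s - q2 h - (-Psi h) * (s - h) := by
  rcases le_or_gt |s - h| (h * (1 - h) / 2) with hnear | hfar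
  · have ha : 0 < h * (1 - h) := mul_pos hh.1 (sub_pos.2 hh.2)
    have hcoeff : 2 / (h * (1 - h)) ≤ 4 / (h ^ 2 * (1 - h) ^ 2) := by
      rw [← mul_pow, div_le_div_iff₀ ha (by positivity)]
      have ha1 : h * (1 - h) ≤ 1 := by nlinarith [hh.1, hh.2]
      nlinarith [mul_le_mul_of_nonneg_left ha1 ha.le]
    nlinarith [le_q2_sub_sub_of_abs_le hh hnear, sq_nonneg (s - h)]
  · exact le_q2_sub_sub_of_lt_abs hh hfar

theorem q_second_order_estimate (h s : ℝ) (hh : h ∈ Set.Ioo (0 : ℝ) 1)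
    (hs : s ∈ Set.Ioo (0 : ℝ) 1) :
    -(4 / (h ^ 2 * (1 - h) ^ 2)) * (s - h) ^ 2
        ≤ q2 s - q2 h - (-(Psi h)) * (s - h) ∧
      q2 s - q2 h - (-(Psi h)) * (s - h) ≤ -(s - h) ^ 2 :=
  ⟨le_q2_sub_sub hh, q2_sub_sub_le hh hs⟩
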